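/- If s is an affine function on a complete lattice, then its least closure s^* is also affine. -/

import Mathlib

/-! Affine maps are monotone, so `lstar s x` is a prefixpoint of `y ↦ x ⊔ s y` above `x`.
Since `s` preserves the join `Y` of the `lstar s x` over `x ∈ S`, `Y` is a prefixpoint of
`y ↦ sSup S ⊔ s y`, giving `lstar s (sSup S) ≤ Y`; the reverse inequality is monotonicity. -/

/-- The least (pre)fixpoint of `y ↦ x ⊔ s y` (Knaster–Tarski); for monotone `s`
this gives the least closure above `s`. -/
def lstar {X : Type*} [CompleteLattice X] (s : X → X) (x : X) : X :=
  sInf {y | x ⊔ s y ≤ y}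

section

variable {X : Type*} [CompleteLattice X] {s : X → X}

lemma monotone_of_map_sSup_pair (hs : ∀ a b : X, s (sSup {a, b}) = ⨆ x ∈ ({a, b} : Set X), s x) :
    Monotone s := by
  intro a b hab
  have h := hs a b
  rw [sSup_pair, sup_eq_right.mpr hab, iSup_pair] at h
  exact h ▸ le_sup_left

lemma lstar_le {x y : X} (h : x ⊔ s y ≤ y) : lstar s x ≤ y :=
  sInf_le h

lemma monotone_lstar : Monotone (lstar s) :=
  fun _ _ hab => sInf_le_sInf fun _ hy => (sup_le_sup_right hab _).trans hy

lemma sup_map_lstar_le (hs : Monotone s) (x : X) : x ⊔ s (lstar s x) ≤ lstar s x :=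
  le_sInf fun _ hy => (sup_le_sup_left (hs (lstar_le hy)) x).trans hy

lemma le_lstar (hs : Monotone s) (x : X) : x ≤ lstar s x :=
  le_sup_left.trans (sup_map_lstar_le hs x)

lemma map_lstar_le (hs : Monotone s) (x : X) : s (lstar s x) ≤ lstar s x :=
  le_sup_right.trans (sup_map_lstar_le hs x)

end

/-- If `s` is affine (preserves all non-empty joins) then so is its least closure `s^*`. -/
theorem lstar_affine {X : Type*} [CompleteLattice X] (s : X → X)
    (haff : ∀ S : Set X, S.Nonempty → s (sSup S) = ⨆ x ∈ S, s x) :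
    ∀ S : Set X, S.Nonempty → lstar s (sSup S) = ⨆ x ∈ S, lstar s x := by
  intro S hS
  have hs : Monotone s := monotone_of_map_sSup_pair fun a b => haff _ (Set.insert_nonempty a _)
  set Y := ⨆ x ∈ S, lstar s x
  have hle_Y {x : X} (hx : x ∈ S) : lstar s x ≤ Y := le_iSup₂ (f := fun x _ => lstar s x) x hx
  have hsY : s Y = ⨆ x ∈ S, s (lstar s x) := by
    rw [show Y = sSup (lstar s '' S) from sSup_image.symm, haff _ (hS.image _), iSup_image]
  refine le_antisymm (lstar_le (sup_le ?_ ?_)) (iSup₂_le fun x hx => monotone_lstar (le_sSup hx))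
  · exact sSup_le fun x hx => (le_lstar hs x).trans (hle_Y hx)
  · rw [hsY]
    exact iSup₂_le fun x hx => (map_lstar_le hs x).trans (hle_Y hx)
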